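/- arXiv:2410.15622 — 5 statements merged into one kernel-verified Lean document; each statement's English description precedes it below -/
import Mathlib

section
/- Let H be a cancellative duo monoid and let ≃ denote associatedness (aH = bH). Then the quotient monoid H/≃ is cancellative. -/
open Pointwise

private lemma stmt8_mem {H : Type*} [Monoid H] (a x : H) :
    x ∈ ({a} : Set H) * Set.univ ↔ ∃ h, a * h = x := by
  simp [Set.mem_mul]

private lemma stmt8_eq_iff {H : Type*} [Monoid H] (a b : H) :
    ({a} : Set H) * Set.univ = ({b} : Set H) * Set.univ ↔
      (∃ u, b * u = a) ∧ (∃ v, a * v = b) := by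
  constructor
  · intro h
    constructor
    · rw [← stmt8_mem, ← h, stmt8_mem]; exact ⟨1, mul_one a⟩
    · rw [← stmt8_mem, h, stmt8_mem]; exact ⟨1, mul_one b⟩
  · rintro ⟨⟨u, hu⟩, ⟨v, hv⟩⟩
    ext x
    rw [stmt8_mem, stmt8_mem]
    constructor
    · rintro ⟨h, rfl⟩; exact ⟨u * h, by rw [← mul_assoc, hu]⟩
    · rintro ⟨h, rfl⟩; exact ⟨v * h, by rw [← mul_assoc, hv]⟩

/-- For a cancellative duo monoid, the quotient by associatedness is cancellative:
`(ab)H = (ac)H` implies `bH = cH`, and `(ba)H = (ca)H` implies `bH = cH`. -/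
theorem stmt8 {H : Type*} [Monoid H]
    (hduo : ∀ a : H, ({a} : Set H) * Set.univ = Set.univ * {a})
    (hcl : ∀ a b c : H, a * b = a * c → b = c)
    (hcr : ∀ a b c : H, b * a = c * a → b = c) :
    ∀ a b c : H,
      (({a * b} : Set H) * Set.univ = ({a * c} : Set H) * Set.univ →
        ({b} : Set H) * Set.univ = ({c} : Set H) * Set.univ) ∧
      (({b * a} : Set H) * Set.univ = ({c * a} : Set H) * Set.univ →
        ({b} : Set H) * Set.univ = ({c} : Set H) * Set.univ) := by
  -- duo: for any a, u there is u' with a * u = u' * a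
  have duo : ∀ a u : H, ∃ u', a * u = u' * a := by
    intro a u
    have : a * u ∈ ({a} : Set H) * Set.univ := (stmt8_mem a _).2 ⟨u, rfl⟩
    rw [hduo a] at this
    simp [Set.mem_mul] at this
    obtain ⟨u', hu'⟩ := this
    exact ⟨u', hu'.symm⟩
  intro a b c
  constructor
  · intro h
    rw [stmt8_eq_iff] at h ⊢
    obtain ⟨⟨u, hu⟩, ⟨v, hv⟩⟩ := h
    refine ⟨⟨u, ?_⟩, ⟨v, ?_⟩⟩
    · exact hcl a _ _ (by rw [← mul_assoc]; exact hu)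
    · exact hcl a _ _ (by rw [← mul_assoc]; exact hv)
  · intro h
    rw [stmt8_eq_iff] at h ⊢
    obtain ⟨⟨u, hu⟩, ⟨v, hv⟩⟩ := h
    obtain ⟨u', hu'⟩ := duo a u
    obtain ⟨v', hv'⟩ := duo a v
    refine ⟨⟨u', ?_⟩, ⟨v', ?_⟩⟩
    · apply hcr a
      rw [mul_assoc, ← hu', ← mul_assoc, hu]
    · apply hcr a
      rw [mul_assoc, ← hv', ← mul_assoc, hv]
end

section
/- If S is a cancellative duo semigroup, then the set of principal ideals of S is a divisor-closed subsemigroup of the ideal semigroup I(S): if I and J are ideals of S and IJ is a principal ideal, then both I and J are principal ideals. -/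
open Pointwise

/-- In a cancellative duo semigroup, the principal ideals form a divisor-closed
subsemigroup of the ideal semigroup: if the setwise product of two ideals is a
principal ideal `aŜ = {a} ∪ aS`, then both factors are principal ideals. -/
theorem stmt13 {S : Type*} [Semigroup S]
    (hduo : ∀ a : S, ({a} : Set S) * Set.univ = Set.univ * {a})
    (hcl : ∀ a b c : S, a * b = a * c → b = c)
    (hcr : ∀ a b c : S, b * a = c * a → b = c)
    (I J : Set S)
    (hIne : I.Nonempty) (hIr : I * Set.univ ⊆ I) (hIl : Set.univ * I ⊆ I)
    (hJne : J.Nonempty) (hJr : J * Set.univ ⊆ J) (hJl : Set.univ * J ⊆ J)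
    (hP : ∃ a : S, I * J = {a} ∪ ({a} : Set S) * Set.univ) :
    (∃ x : S, I = {x} ∪ ({x} : Set S) * Set.univ) ∧
    (∃ y : S, J = {y} ∪ ({y} : Set S) * Set.univ) := by
  obtain ⟨a, hP⟩ := hP
  have haIJ : a ∈ I * J := by rw [hP]; exact Or.inl rfl
  obtain ⟨x₀, hx₀, y₀, hy₀, hxy⟩ := haIJ
  beta_reduce at hxy
  constructor
  · refine ⟨x₀, Set.Subset.antisymm ?_ ?_⟩
    · intro x hx
      have hmem : x * y₀ ∈ I * J := Set.mul_mem_mul hx hy₀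
      rw [hP] at hmem
      rcases hmem with h | h
      · left
        rw [Set.mem_singleton_iff] at h ⊢
        exact hcr y₀ x x₀ (by rw [h, ← hxy])
      · obtain ⟨a', ha', s, -, hs⟩ := h
        beta_reduce at hs
        rw [Set.mem_singleton_iff] at ha'
        rw [ha'] at hs
        have hys : y₀ * s ∈ Set.univ * ({y₀} : Set S) := by
          rw [← hduo y₀]; exact Set.mul_mem_mul rfl (Set.mem_univ s)
        obtain ⟨t, -, y', hy', ht⟩ := hys
        beta_reduce at ht
        rw [Set.mem_singleton_iff] at hy'
        rw [hy'] at ht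
        right
        refine ⟨x₀, rfl, t, Set.mem_univ t, ?_⟩
        beta_reduce
        apply hcr y₀
        calc x₀ * t * y₀ = x₀ * (t * y₀) := by rw [mul_assoc]
          _ = x₀ * (y₀ * s) := by rw [ht]
          _ = x₀ * y₀ * s := by rw [mul_assoc]
          _ = a * s := by rw [hxy]
          _ = x * y₀ := hs
    · intro x hx
      rcases hx with h | h
      · rw [Set.mem_singleton_iff] at h; subst h; exact hx₀
      · obtain ⟨x', hx', s, -, hs⟩ := h
        rw [Set.mem_singleton_iff] at hx'
        rw [hx'] at hs
        exact hIr ⟨x₀, hx₀, s, Set.mem_univ s, hs⟩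
  · refine ⟨y₀, Set.Subset.antisymm ?_ ?_⟩
    · intro y hy
      have hmem : x₀ * y ∈ I * J := Set.mul_mem_mul hx₀ hy
      rw [hP] at hmem
      rcases hmem with h | h
      · left
        rw [Set.mem_singleton_iff] at h ⊢
        exact hcl x₀ y y₀ (by rw [h, ← hxy])
      · obtain ⟨a', ha', s, -, hs⟩ := h
        beta_reduce at hs
        rw [Set.mem_singleton_iff] at ha'
        rw [ha'] at hs
        right
        refine ⟨y₀, rfl, s, Set.mem_univ s, ?_⟩
        beta_reduce
        apply hcl x₀
        calc x₀ * (y₀ * s) = x₀ * y₀ * s := by rw [mul_assoc]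
          _ = a * s := by rw [hxy]
          _ = x₀ * y := hs
    · intro y hy
      rcases hy with h | h
      · rw [Set.mem_singleton_iff] at h; subst h; exact hy₀
      · obtain ⟨y', hy', s, -, hs⟩ := h
        rw [Set.mem_singleton_iff] at hy'
        rw [hy'] at hs
        exact hJr ⟨y₀, hy₀, s, Set.mem_univ s, hs⟩
end

section
/- Let H be an Archimedean duo monoid and I a finitely generated proper ideal of H. Then for every a ∈ H there exists an integer k ≥ 1 such that I^k ⊆ aH. -/
open Pointwise

/-- Let `H` be an Archimedean duo monoid and `I = XH` a finitely generated proper ideal.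
Then for every `a ∈ H` some power `I^k` (`k ≥ 1`) is contained in `aH`. -/
theorem stmt16 {H : Type*} [Monoid H]
    (hduo : ∀ a : H, ({a} : Set H) * Set.univ = Set.univ * {a})
    (harch : ∀ a b : H, ¬ IsUnit b →
      ∃ k : ℕ, 1 ≤ k ∧ b ^ k ∈ Set.univ * ({a} : Set H) * Set.univ)
    (I : Set H) (X : Finset H) (hXne : X.Nonempty)
    (hI : I = (X : Set H) * Set.univ) (hproper : I ≠ Set.univ) :
    ∀ a : H, ∃ k : ℕ, 1 ≤ k ∧ I ^ k ⊆ ({a} : Set H) * Set.univ := by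
  classical
  intro a
  -- duo: we can move any element past any other to the right
  have swap : ∀ (c b : H), ∃ d : H, b * c = c * d := by
    intro c b
    have h : b * c ∈ Set.univ * ({c} : Set H) := ⟨b, trivial, c, rfl, rfl⟩
    rw [← hduo c] at h
    obtain ⟨x, hx, y, hy, hxy⟩ := h
    rw [Set.mem_singleton_iff] at hx
    subst hx
    exact ⟨y, hxy.symm⟩
  -- every generator is a non-unit
  have hnon : ∀ x ∈ X, ¬ IsUnit x := by
    intro x hx hu
    apply hproper
    rw [hI]
    apply Set.eq_univ_of_univ_subset
    intro y _
    obtain ⟨u, hu'⟩ := hu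
    refine ⟨x, hx, ↑u⁻¹ * y, trivial, ?_⟩
    show x * (↑u⁻¹ * y) = y
    rw [← hu', Units.mul_inv_cancel_left]
  -- each generator has a power in aH
  have key : ∀ x ∈ X, ∃ k : ℕ, 1 ≤ k ∧ ∃ e : H, x ^ k = a * e := by
    intro x hx
    obtain ⟨k, hk1, hk⟩ := harch a x (hnon x hx)
    obtain ⟨u, hu, v, -, huv⟩ := hk
    obtain ⟨h1, -, a', ha', h2⟩ := hu
    rw [Set.mem_singleton_iff] at ha'
    have h2' : h1 * a = u := by rw [← ha']; exact h2
    have huv' : u * v = x ^ k := huv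
    obtain ⟨d, hd⟩ := swap a h1
    exact ⟨k, hk1, d * v, by rw [← huv', ← h2', hd, mul_assoc]⟩
  choose! g hg1 cf hgc using key
  set K := X.sup g with hK
  -- moving copies of x to the front of a product
  have move : ∀ (l : List H) (x : H), ∃ d : H, l.prod = x ^ (l.count x) * d := by
    intro l x
    induction l with
    | nil => exact ⟨1, by simp⟩
    | cons e t ih =>
      obtain ⟨d, hd⟩ := ih
      by_cases hex : e = x
      · subst hex
        refine ⟨d, ?_⟩
        rw [List.prod_cons, hd, List.count_cons_self, pow_succ', ← mul_assoc]
      · obtain ⟨d', hd'⟩ := swap (x ^ t.count x) e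
        refine ⟨d' * d, ?_⟩
        have hcount : (e :: t).count x = t.count x := by
          simp [List.count_cons, hex]
        rw [List.prod_cons, hd, ← mul_assoc, hd', hcount, mul_assoc]
  -- pigeonhole
  have pigeon : ∀ l : List H, (∀ y ∈ l, y ∈ X) →
      X.card * (K - 1) + 1 ≤ l.length → ∃ x ∈ X, K ≤ l.count x := by
    intro l hl hlen
    by_contra hc
    push_neg at hc
    have hsum : l.length = ∑ x ∈ X, l.count x := by
      have h1 : ∑ x ∈ l.toFinset, l.count x = l.length := by
        simpa using Multiset.toFinset_sum_count_eq (l : Multiset H)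
      rw [← h1]
      exact Finset.sum_subset (fun x hx => hl x (List.mem_toFinset.mp hx))
        (fun x _ hx => List.count_eq_zero_of_not_mem
          (fun h => hx (List.mem_toFinset.mpr h)))
    have hle : l.length ≤ X.card * (K - 1) := by
      rw [hsum]
      calc ∑ x ∈ X, l.count x ≤ ∑ _x ∈ X, (K - 1) :=
            Finset.sum_le_sum (fun x hx => by have := hc x hx; omega)
        _ = X.card * (K - 1) := by rw [Finset.sum_const, smul_eq_mul]
    omega
  -- representation of elements of I ^ k
  have rep : ∀ k : ℕ, 1 ≤ k → ∀ b ∈ I ^ k,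
      ∃ l : List H, l.length = k ∧ (∀ y ∈ l, y ∈ X) ∧ ∃ h : H, b = l.prod * h := by
    intro k
    induction k with
    | zero => omega
    | succ n ih =>
      intro _ b hb
      rcases Nat.eq_zero_or_pos n with hn | hn
      · subst hn
        rw [pow_one, hI] at hb
        obtain ⟨x, hx, h, -, hxh⟩ := hb
        have hxh' : x * h = b := hxh
        exact ⟨[x], rfl, by simpa using hx, h, by simp [hxh'.symm]⟩
      · rw [pow_succ] at hb
        obtain ⟨u, hu, v, hv, huv⟩ := hb
        have huv' : u * v = b := huv
        obtain ⟨l, hlen, hlX, h, hrep⟩ := ih hn u hu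
        rw [hI] at hv
        obtain ⟨x, hx, h2, -, hxh2⟩ := hv
        have hxh2' : x * h2 = v := hxh2
        obtain ⟨h', hh'⟩ := swap x h
        refine ⟨l ++ [x], by simp [hlen], ?_, h' * h2, ?_⟩
        · intro y hy
          rcases List.mem_append.mp hy with hy | hy
          · exact hlX y hy
          · rw [List.mem_singleton.mp hy]; exact hx
        · rw [List.prod_append, List.prod_singleton, ← huv', hrep, ← hxh2']
          rw [mul_assoc, ← mul_assoc h x h2, hh', mul_assoc, mul_assoc]
  refine ⟨X.card * (K - 1) + 1, Nat.le_add_left 1 _, ?_⟩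
  intro b hb
  obtain ⟨l, hlen, hlX, h, hrep⟩ := rep _ (Nat.le_add_left 1 _) b hb
  obtain ⟨x, hxX, hcount⟩ := pigeon l hlX (by omega)
  obtain ⟨d, hd⟩ := move l x
  have hgK : g x ≤ K := Finset.le_sup hxX
  have hpow : ∀ m : ℕ, g x ≤ m → ∃ e : H, x ^ m = a * e := by
    intro m hm
    obtain ⟨n, rfl⟩ := Nat.exists_eq_add_of_le hm
    exact ⟨cf x * x ^ n, by rw [pow_add, hgc x hxX, mul_assoc]⟩
  obtain ⟨e, he⟩ := hpow (l.count x) (le_trans hgK hcount)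
  have hfinal : b = a * (e * (d * h)) := by
    rw [hrep, hd, he, mul_assoc, mul_assoc]
  exact ⟨a, rfl, e * (d * h), trivial, hfinal.symm⟩
end

section
/- A duo monoid H is strongly Archimedean if and only if every non-trivial divisor-closed subsemigroup of the ideal semigroup I(H) contains all principal ideals of H. -/
open Pointwise

/-- An ideal of a monoid `H`: a nonempty subset `I` with `IH ⊆ I` and `HI ⊆ I`. -/
def IsIdeal {H : Type*} [Monoid H] (I : Set H) : Prop :=
  I.Nonempty ∧ I * Set.univ ⊆ I ∧ Set.univ * I ⊆ I

section Aux

variable {H : Type*} [Monoid H]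

lemma aux_subset_mul_univ (s : Set H) : s ⊆ s * Set.univ :=
  fun x hx => ⟨x, hx, 1, trivial, mul_one x⟩

lemma aux_subset_univ_mul (s : Set H) : s ⊆ Set.univ * s :=
  fun x hx => ⟨1, trivial, x, hx, one_mul x⟩

lemma aux_univ_mul_univ : (Set.univ : Set H) * Set.univ = Set.univ :=
  Set.Subset.antisymm (Set.subset_univ _) (aux_subset_mul_univ _)

lemma aux_ideal_univ : IsIdeal (Set.univ : Set H) :=
  ⟨⟨1, trivial⟩, by simp [aux_univ_mul_univ], by simp [aux_univ_mul_univ]⟩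

lemma aux_ideal_mul {I J : Set H} (hI : IsIdeal I) (hJ : IsIdeal J) : IsIdeal (I * J) := by
  refine ⟨hI.1.mul hJ.1, ?_, ?_⟩
  · calc I * J * Set.univ = I * (J * Set.univ) := mul_assoc _ _ _
      _ ⊆ I * J := Set.mul_subset_mul_left hJ.2.1
  · calc Set.univ * (I * J) = Set.univ * I * J := (mul_assoc _ _ _).symm
      _ ⊆ I * J := Set.mul_subset_mul_right hI.2.2

variable (hduo : ∀ a : H, ({a} : Set H) * Set.univ = Set.univ * {a})

include hduo

/-- In a duo monoid, right-invertible implies unit. -/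
lemma aux_unit_of_right {x y : H} (h : x * y = 1) : IsUnit x := by
  have h1 : (1 : H) ∈ ({x} : Set H) * Set.univ := ⟨x, rfl, y, trivial, h⟩
  rw [hduo, Set.mul_singleton] at h1
  obtain ⟨z, -, hz0⟩ := h1
  have hz : z * x = 1 := hz0
  have hyz : y = z := by
    calc y = 1 * y := (one_mul y).symm
      _ = (z * x) * y := by rw [hz]
      _ = z * (x * y) := mul_assoc _ _ _
      _ = z := by rw [h, mul_one]
  exact ⟨⟨x, y, h, hyz ▸ hz⟩, rfl⟩

/-- In a duo monoid, left-invertible implies unit. -/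
lemma aux_unit_of_left {x y : H} (h : y * x = 1) : IsUnit x := by
  have h1 : (1 : H) ∈ Set.univ * ({x} : Set H) := ⟨y, trivial, x, rfl, h⟩
  rw [← hduo, Set.singleton_mul] at h1
  obtain ⟨z, -, hz0⟩ := h1
  exact aux_unit_of_right hduo (show x * z = 1 from hz0)

lemma aux_nonunit_mul_right {x : H} (hx : ¬ IsUnit x) (h : H) : ¬ IsUnit (x * h) := by
  intro hu
  obtain ⟨u, hu'⟩ := hu
  apply hx
  exact aux_unit_of_right hduo (show x * (h * ↑u⁻¹) = 1 by
    rw [← mul_assoc, ← hu', Units.mul_inv])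

lemma aux_nonunit_mul_left {x : H} (hx : ¬ IsUnit x) (h : H) : ¬ IsUnit (h * x) := by
  intro hu
  obtain ⟨u, hu'⟩ := hu
  apply hx
  exact aux_unit_of_left hduo (show (↑u⁻¹ * h) * x = 1 by
    rw [mul_assoc, ← hu', Units.inv_mul])

/-- `H a H = a H` in a duo monoid. -/
lemma aux_HaH (a : H) : Set.univ * ({a} : Set H) * Set.univ = {a} * Set.univ := by
  rw [← hduo, mul_assoc, aux_univ_mul_univ]

lemma aux_ideal_principal (a : H) : IsIdeal (({a} : Set H) * Set.univ) := by
  refine ⟨⟨a, a, rfl, 1, trivial, mul_one a⟩, ?_, ?_⟩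
  · rw [mul_assoc, aux_univ_mul_univ]
  · rw [hduo, ← mul_assoc, aux_univ_mul_univ]

end Aux

/-- A duo monoid is strongly Archimedean iff every non-trivial divisor-closed
subsemigroup of the ideal semigroup contains all principal ideals. -/
theorem stmt17 {H : Type*} [Monoid H]
    (hduo : ∀ a : H, ({a} : Set H) * Set.univ = Set.univ * {a}) :
    (∀ a : H, ∃ k : ℕ, 1 ≤ k ∧
        ({x : H | ¬ IsUnit x}) ^ k ⊆ Set.univ * ({a} : Set H) * Set.univ) ↔
    ∀ T : Set (Set H),
      (∀ I ∈ T, IsIdeal I) →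
      (∀ I ∈ T, ∀ J ∈ T, I * J ∈ T) →
      (∀ I J : Set H, IsIdeal I → J ∈ T →
        (∃ A B : Set H, IsIdeal A ∧ IsIdeal B ∧ J = A * I * B) → I ∈ T) →
      (∃ I ∈ T, I ≠ Set.univ) →
      ∀ a : H, ({a} : Set H) * Set.univ ∈ T := by
  constructor
  · -- forward: strongly Archimedean → divisor-closed subsemigroups contain principal ideals
    intro hSA T hIdeal hMul hDiv hnt a
    obtain ⟨I0, hI0T, hI0ne⟩ := hnt
    have hI0 : IsIdeal I0 := hIdeal I0 hI0T
    -- I0 consists of nonunits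
    have hI0N : I0 ⊆ {x : H | ¬ IsUnit x} := by
      intro x hx hux
      apply hI0ne
      apply Set.eq_univ_of_univ_subset
      intro h _hm
      obtain ⟨u, hu⟩ := hux
      have : h = (h * ↑u⁻¹) * x := by rw [mul_assoc, ← hu, Units.inv_mul, mul_one]
      rw [this]
      exact hI0.2.2 ⟨h * ↑u⁻¹, trivial, x, hx, rfl⟩
    obtain ⟨k, hk1, hksub⟩ := hSA a
    -- I0^k ∈ T
    have hIkT : I0 ^ k ∈ T := by
      have : ∀ n : ℕ, 1 ≤ n → I0 ^ n ∈ T := by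
        intro n hn
        induction n, hn using Nat.le_induction with
        | base => rwa [pow_one]
        | succ n hn ih => rw [pow_succ]; exact hMul _ ih _ hI0T
      exact this k hk1
    -- I0^k ⊆ aH
    have hIk_sub : I0 ^ k ⊆ ({a} : Set H) * Set.univ := by
      calc I0 ^ k ⊆ ({x : H | ¬ IsUnit x}) ^ k := Set.pow_subset_pow_left hI0N
        _ ⊆ Set.univ * ({a} : Set H) * Set.univ := hksub
        _ = ({a} : Set H) * Set.univ := aux_HaH hduo a
    have hIkideal : IsIdeal (I0 ^ k) := by
      have : ∀ n : ℕ, 1 ≤ n → IsIdeal (I0 ^ n) := by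
        intro n hn
        induction n, hn using Nat.le_induction with
        | base => rwa [pow_one]
        | succ n hn ih => rw [pow_succ]; exact aux_ideal_mul ih hI0
      exact this k hk1
    -- the cofactor B
    set B : Set H := {x : H | a * x ∈ I0 ^ k} with hBdef
    have hBideal : IsIdeal B := by
      refine ⟨?_, ?_, ?_⟩
      · obtain ⟨j, hj⟩ := hIkideal.1
        have hmem := hIk_sub hj
        rw [Set.singleton_mul] at hmem
        obtain ⟨x, -, hx0⟩ := hmem
        have hx : a * x = j := hx0
        exact ⟨x, show a * x ∈ I0 ^ k from hx ▸ hj⟩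
      · rintro z ⟨x, hx, h, -, rfl⟩
        show a * (x * h) ∈ I0 ^ k
        rw [← mul_assoc]
        exact hIkideal.2.1 ⟨a * x, hx, h, trivial, rfl⟩
      · rintro z ⟨h, -, x, hx, rfl⟩
        show a * (h * x) ∈ I0 ^ k
        -- a * h ∈ aH = Ha, so a * h = h' * a
        have hah : a * h ∈ Set.univ * ({a} : Set H) := by
          rw [← hduo]; exact ⟨a, rfl, h, trivial, rfl⟩
        rw [Set.mul_singleton] at hah
        obtain ⟨h', -, hh'0⟩ := hah
        have hh' : h' * a = a * h := hh'0
        rw [← mul_assoc, ← hh', mul_assoc]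
        exact hIkideal.2.2 ⟨h', trivial, a * x, hx, rfl⟩
    -- I0^k = univ * (aH) * B
    have hfact : I0 ^ k = Set.univ * (({a} : Set H) * Set.univ) * B := by
      have h1 : Set.univ * (({a} : Set H) * Set.univ) = ({a} : Set H) * Set.univ := by
        rw [← mul_assoc, ← hduo, mul_assoc, aux_univ_mul_univ]
      rw [h1, mul_assoc, Set.Subset.antisymm hBideal.2.2 (aux_subset_univ_mul B),
        Set.singleton_mul]
      apply Set.Subset.antisymm
      · intro j hj
        have hmem := hIk_sub hj
        rw [Set.singleton_mul] at hmem
        obtain ⟨x, -, hx0⟩ := hmem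
        have hx : a * x = j := hx0
        exact ⟨x, show a * x ∈ I0 ^ k from hx ▸ hj, hx⟩
      · rintro z ⟨x, hx, rfl⟩
        exact hx
    exact hDiv _ _ (aux_ideal_principal hduo a) hIkT
      ⟨Set.univ, B, aux_ideal_univ, hBideal, hfact⟩
  · -- reverse
    intro hT a
    set N : Set H := {x : H | ¬ IsUnit x} with hNdef
    rcases N.eq_empty_or_nonempty with hNe | hNne
    · refine ⟨1, le_refl 1, ?_⟩
      rw [pow_one, hNe]
      exact Set.empty_subset _
    · set T : Set (Set H) := {J | IsIdeal J ∧ ∃ k : ℕ, 1 ≤ k ∧ N ^ k ⊆ J} with hTdef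
      have hNideal : IsIdeal N := by
        refine ⟨hNne, ?_, ?_⟩
        · rintro z ⟨x, hx, h, -, rfl⟩
          exact aux_nonunit_mul_right hduo hx h
        · rintro z ⟨h, -, x, hx, rfl⟩
          exact aux_nonunit_mul_left hduo hx h
      have h1 : ∀ I ∈ T, IsIdeal I := fun I hI => hI.1
      have h2 : ∀ I ∈ T, ∀ J ∈ T, I * J ∈ T := by
        rintro I ⟨hIi, kI, hkI, hNI⟩ J ⟨hJi, kJ, hkJ, hNJ⟩
        refine ⟨aux_ideal_mul hIi hJi, kI + kJ, le_trans hkI (Nat.le_add_right _ _), ?_⟩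
        rw [pow_add]
        exact Set.mul_subset_mul hNI hNJ
      have h3 : ∀ I J : Set H, IsIdeal I → J ∈ T →
          (∃ A B : Set H, IsIdeal A ∧ IsIdeal B ∧ J = A * I * B) → I ∈ T := by
        rintro I J hIi ⟨hJi, k, hk, hNJ⟩ ⟨A, B, hAi, hBi, rfl⟩
        refine ⟨hIi, k, hk, hNJ.trans ?_⟩
        calc A * I * B ⊆ Set.univ * I * Set.univ :=
              Set.mul_subset_mul (Set.mul_subset_mul_right (Set.subset_univ A)) (Set.subset_univ B)
          _ ⊆ I * Set.univ := Set.mul_subset_mul_right hIi.2.2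
          _ ⊆ I := hIi.2.1
      have h4 : ∃ I ∈ T, I ≠ Set.univ := by
        refine ⟨N, ⟨hNideal, 1, le_refl 1, by rw [pow_one]⟩, ?_⟩
        intro h
        have h1N : (1 : H) ∈ N := h ▸ Set.mem_univ 1
        exact h1N isUnit_one
      obtain ⟨-, k, hk, hsub⟩ := hT T h1 h2 h3 h4 a
      refine ⟨k, hk, hsub.trans ?_⟩
      rw [aux_HaH hduo a]
end

section
/- Let H be a strongly Archimedean, cancellative, duo monoid whose group of units is periodic, and let M be a non-empty subset of H with M = M·M (setwise). Then 1 ∈ M. -/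
open Pointwise

/-- In a strongly Archimedean, cancellative, duo monoid whose group of units is
periodic, any nonempty subset `M` with `M = M·M` contains the identity. -/
theorem stmt19 {H : Type*} [Monoid H]
    (hduo : ∀ a : H, ({a} : Set H) * Set.univ = Set.univ * {a})
    (hcl : ∀ a b c : H, a * b = a * c → b = c)
    (hcr : ∀ a b c : H, b * a = c * a → b = c)
    (hsa : ∀ a : H, ∃ k : ℕ, 1 ≤ k ∧
      ({x : H | ¬ IsUnit x}) ^ k ⊆ ({a} : Set H) * Set.univ)
    (hper : ∀ u : Hˣ, ∃ n : ℕ, 1 ≤ n ∧ u ^ n = 1)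
    (M : Set H) (hne : M.Nonempty) (hMM : M * M = M) :
    (1 : H) ∈ M := by
  -- M ^ n = M for all n ≥ 1
  have hpow : ∀ n : ℕ, 1 ≤ n → M ^ n = M := by
    intro n hn
    induction n with
    | zero => omega
    | succ m ih =>
      rcases Nat.eq_or_lt_of_le hn with h | h
      · simp [← h]
      · rw [pow_succ, ih (by omega), hMM]
  by_cases hu : ∃ m ∈ M, IsUnit m
  · obtain ⟨m, hm, u, hum⟩ := hu
    obtain ⟨n, hn, hun⟩ := hper u
    have h1 : m ^ n = 1 := by
      rw [← hum, ← Units.val_pow_eq_pow_val, hun, Units.val_one]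
    have : m ^ n ∈ M ^ n := Set.pow_mem_pow hm
    rwa [hpow n hn, h1] at this
  · push_neg at hu
    obtain ⟨a, ha⟩ := hne
    obtain ⟨k, hk, hsub⟩ := hsa a
    have haM : a ∈ M ^ k * M := by
      rw [← pow_succ, hpow (k + 1) (by omega)]; exact ha
    obtain ⟨x, hx, m, hm, hxm⟩ := haM
    have hxn : x ∈ ({y : H | ¬ IsUnit y}) ^ k :=
      Set.pow_subset_pow_left (fun y hy => hu y hy) hx
    obtain ⟨a', ha', h, -, hah⟩ := hsub hxn
    rw [Set.mem_singleton_iff] at ha'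
    simp only at hah hxm
    rw [ha'] at hah
    have hhm : h * m = 1 := hcl a (h * m) 1 (by rw [← mul_assoc, hah, hxm, mul_one])
    have hmh : m * h = 1 := by
      apply hcr m (m * h) 1
      rw [mul_assoc, hhm, mul_one, one_mul]
    exact absurd ⟨⟨m, h, hmh, hhm⟩, rfl⟩ (hu m hm)
end
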